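/- Let α ∈ ℂ satisfy 7α³ + 7α + 1 = 0 and let S_α := P − U_{a₁,…,a₅} with a₁ := −(12/7)α² − (384/49)α − 8/7, a₂ := −(32/7)α² + (24/49)α − 4, a₃ := −4α² + (24/49)α − 4, a₄ := −(8/7)α² + (8/49)α − 8/7, a₅ := 49α² − 7α + 50. Then 1 + α² ≠ 0, and the linear form (1 + α²)·(z + w) − x divides the plane septic S_α(x, 0, z, w) in the polynomial ring ℂ[x, z, w]; that is, the restriction of S_α to the plane {y = 0} splits as a line S_{y,1}: z − x/(1+α²) + w = 0 times a sextic curve S_{y,6}. -/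

import Mathlib

/-!
A polynomial in `x, z, w` is divisible by `x - c (z + w)` as soon as it vanishes after the
substitution `x ↦ c (z + w)`: modulo that linear form every variable is congruent to its image.
Over `ℂ` this vanishing can be checked pointwise, so with `c = 1 + α²` it comes down to
`P = U` at every point `(c (z + w), 0, z, w)`, a polynomial identity in `α, z, w` that holds
modulo `7α³ + 7α + 1`. Finally `1 + α² ≠ 0` because `7α (1 + α²) = -1`.
-/

open MvPolynomial

/-- The septic `P(x,y,z,w)` (variables `X 0 = x, X 1 = y, X 2 = z, X 3 = w`). -/
noncomputable def Psept : MvPolynomial (Fin 4) ℂ :=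
  X 0 * ((X 0) ^ 6 - 21 * (X 0) ^ 4 * (X 1) ^ 2 + 35 * (X 0) ^ 2 * (X 1) ^ 4
      - 7 * (X 1) ^ 6)
    + 7 * X 2 * (((X 0) ^ 2 + (X 1) ^ 2) ^ 3
        - 8 * (X 2) ^ 2 * ((X 0) ^ 2 + (X 1) ^ 2) ^ 2
        + 16 * (X 2) ^ 4 * ((X 0) ^ 2 + (X 1) ^ 2))
    - 64 * (X 2) ^ 7

/-- `U_{a₁,…,a₅}(x,y,z,w) = (z + a₅w)(a₁z³ + a₂z²w + a₃zw² + a₄w³ + (z+w)(x²+y²))²`. -/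
noncomputable def Usept (a₁ a₂ a₃ a₄ a₅ : ℂ) : MvPolynomial (Fin 4) ℂ :=
  (X 2 + C a₅ * X 3) *
    (C a₁ * (X 2) ^ 3 + C a₂ * (X 2) ^ 2 * X 3 + C a₃ * X 2 * (X 3) ^ 2
        + C a₄ * (X 3) ^ 3 + (X 2 + X 3) * ((X 0) ^ 2 + (X 1) ^ 2)) ^ 2

theorem MvPolynomial.X_sub_dvd_of_aeval_update_eq_zero {R σ : Type*} [CommRing R]
    [DecidableEq σ] {p : MvPolynomial σ R} (i : σ) (q : MvPolynomial σ R)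
    (hp : aeval (Function.update X i q) p = 0) : X i - q ∣ p := by
  set I := Ideal.span {X i - q}
  have hcomp : (Ideal.Quotient.mkₐ R I).comp (aeval (Function.update X i q)) =
      Ideal.Quotient.mkₐ R I := by
    refine algHom_ext fun j => ?_
    rcases eq_or_ne j i with rfl | hj
    · rw [AlgHom.comp_apply, aeval_X, Function.update_self, Ideal.Quotient.mkₐ_eq_mk,
        Ideal.Quotient.eq]
      exact Ideal.mem_span_singleton.mpr ⟨-1, by ring⟩
    · rw [AlgHom.comp_apply, aeval_X, Function.update_of_ne hj]
  have hpI : Ideal.Quotient.mkₐ R I p = 0 := by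
    rw [← hcomp, AlgHom.comp_apply, hp, map_zero]
  exact Ideal.mem_span_singleton.mp (Ideal.Quotient.eq_zero_iff_mem.mp hpI)

theorem one_add_sq_ne_zero_of_cubic_eq_zero {R : Type*} [CommRing R] [Nontrivial R]
    {α : R} (hα : 7 * α ^ 3 + 7 * α + 1 = 0) : 1 + α ^ 2 ≠ 0 := fun h =>
  one_ne_zero (α := R) (by linear_combination hα - 7 * α * h)

theorem eval_aeval_update_aeval (c : ℂ) (S : MvPolynomial (Fin 4) ℂ) (p : Fin 3 → ℂ) :
    eval p (aeval (Function.update X 0 (C c * (X 1 + X 2)))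
        (aeval (![X 0, 0, X 1, X 2] : Fin 4 → MvPolynomial (Fin 3) ℂ) S)) =
      eval ![c * (p 1 + p 2), 0, p 1, p 2] S := by
  simp only [aeval_def, algebraMap_eq, ← eval_assoc]
  congr 2
  funext j
  fin_cases j <;> simp [Function.update]

set_option maxRecDepth 100000 in
theorem eval_Psept_eq_eval_Usept_on_line {α : ℂ} (hα : 7 * α ^ 3 + 7 * α + 1 = 0)
    {a₁ a₂ a₃ a₄ a₅ : ℂ}
    (ha₁ : a₁ = -(12 / 7) * α ^ 2 - (384 / 49) * α - 8 / 7)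
    (ha₂ : a₂ = -(32 / 7) * α ^ 2 + (24 / 49) * α - 4)
    (ha₃ : a₃ = -4 * α ^ 2 + (24 / 49) * α - 4)
    (ha₄ : a₄ = -(8 / 7) * α ^ 2 + (8 / 49) * α - 8 / 7)
    (ha₅ : a₅ = 49 * α ^ 2 - 7 * α + 50) (z w : ℂ) :
    eval ![(1 + α ^ 2) * (z + w), 0, z, w] Psept =
      eval ![(1 + α ^ 2) * (z + w), 0, z, w] (Usept a₁ a₂ a₃ a₄ a₅) := by
  simp only [Psept, Usept, map_sub, map_add, map_mul, map_pow, eval_X, eval_C, eval_ofNat,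
    Matrix.cons_val_zero, Matrix.cons_val_one, Matrix.cons_val]
  subst ha₁ ha₂ ha₃ ha₄ ha₅
  grind

/-- For α with 7α³ + 7α + 1 = 0 and the parameters of the theorem,
one has 1 + α² ≠ 0 and the linear form (1 + α²)·(z + w) − x divides the plane
septic S_α(x, 0, z, w) in ℂ[x, z, w] (variables `X 0 = x, X 1 = z, X 2 = w`);
i.e. the restriction of S_α to {y = 0} splits off the line z − x/(1+α²) + w = 0. -/
theorem septic_plane_restriction_splits (α : ℂ) (hα : 7 * α ^ 3 + 7 * α + 1 = 0)
    (a₁ a₂ a₃ a₄ a₅ : ℂ)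
    (ha₁ : a₁ = -(12 / 7) * α ^ 2 - (384 / 49) * α - 8 / 7)
    (ha₂ : a₂ = -(32 / 7) * α ^ 2 + (24 / 49) * α - 4)
    (ha₃ : a₃ = -4 * α ^ 2 + (24 / 49) * α - 4)
    (ha₄ : a₄ = -(8 / 7) * α ^ 2 + (8 / 49) * α - 8 / 7)
    (ha₅ : a₅ = 49 * α ^ 2 - 7 * α + 50)
    (S : MvPolynomial (Fin 4) ℂ) (hS : S = Psept - Usept a₁ a₂ a₃ a₄ a₅)
    (Sy : MvPolynomial (Fin 3) ℂ)
    (hSy : Sy = aeval (![X 0, 0, X 1, X 2] : Fin 4 → MvPolynomial (Fin 3) ℂ) S) :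
    1 + α ^ 2 ≠ 0 ∧
      (C (1 + α ^ 2) * (X 1 + X 2) - X 0 : MvPolynomial (Fin 3) ℂ) ∣ Sy := by
  refine ⟨one_add_sq_ne_zero_of_cubic_eq_zero hα, ?_⟩
  rw [← neg_sub, neg_dvd]
  refine X_sub_dvd_of_aeval_update_eq_zero 0 _ (MvPolynomial.funext fun p => ?_)
  rw [hSy, eval_aeval_update_aeval, hS, map_sub, map_zero,
    eval_Psept_eq_eval_Usept_on_line hα ha₁ ha₂ ha₃ ha₄ ha₅, sub_self]
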